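/- For all 0 ≤ m ≤ p and 1 ≤ r ≤ p, G^{(m)}_{0,r} = conj(G^{(m)}_{0,-r}). -/

import Mathlib

open scoped Classical
open Finset

noncomputable section

/-- Bit strings in {±1}^{2p+1}, indexed by integers -p ≤ j ≤ p (Bool-encoded). -/
def QStr (p : ℕ) : Type := {j : ℤ // j ∈ Finset.Icc (-(p : ℤ)) (p : ℤ)} → Bool

instance (p : ℕ) : Fintype (QStr p) := by unfold QStr; infer_instance
instance (p : ℕ) : DecidableEq (QStr p) := by unfold QStr; infer_instance

/-- The ±1 entry of the string `a` at index `j` (1 outside the index range). -/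
def ent (p : ℕ) (a : QStr p) (j : ℤ) : ℝ :=
  if h : j ∈ Finset.Icc (-(p : ℤ)) (p : ℤ) then (if a ⟨j, h⟩ then 1 else -1) else 1

/-- Transfer matrix element ⟨x|e^{iβX}|y⟩ = cos β if x = y, i sin β otherwise. -/
def bket (x y : ℝ) (β : ℝ) : ℂ :=
  if x = y then (Real.cos β : ℂ) else Complex.I * (Real.sin β : ℂ)

/-- f(a) = (1/2)⟨a₁|e^{iβ₁X}|a₂⟩⋯⟨a_p|e^{iβ_pX}|a₀⟩⟨a₀|e^{-iβ_pX}|a_{-p}⟩⋯⟨a_{-2}|e^{-iβ₁X}|a_{-1}⟩. -/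
def fQ (p : ℕ) (β : ℕ → ℝ) (a : QStr p) : ℂ :=
  (1 / 2 : ℂ) * ∏ r ∈ Finset.Icc 1 p,
    (bket (ent p a (r : ℤ)) (ent p a (if r = p then 0 else (r : ℤ) + 1)) (β r) *
      bket (ent p a (if r = p then 0 else -((r : ℤ) + 1))) (ent p a (-(r : ℤ))) (-(β r)))

/-- Γ_r = γ_r, Γ₀ = 0, Γ_{-r} = -γ_r. -/
def Gam (γ : ℕ → ℝ) (j : ℤ) : ℝ :=
  if 0 < j then γ j.toNat else if j < 0 then -(γ (-j).toNat) else 0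

/-- Γ·(ab) = Σ_{j=-p}^{p} Γ_j a_j b_j. -/
def Gdot (p : ℕ) (γ : ℕ → ℝ) (a b : QStr p) : ℝ :=
  ∑ j ∈ Finset.Icc (-(p : ℤ)) (p : ℤ), Gam γ j * ent p a j * ent p b j

/-- a ∈ B₀ iff a_{-r} = a_r for all 1 ≤ r ≤ p. -/
def symB (p : ℕ) (a : QStr p) : Prop :=
  ∀ r ∈ Finset.Icc (1 : ℤ) (p : ℤ), ent p a (-r) = ent p a r

/-- T(a): the largest 1 ≤ r ≤ p with a_r ≠ a_{-r}, and 0 for a ∈ B₀. -/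
def Tof (p : ℕ) (a : QStr p) : ℤ :=
  (((Finset.Icc (1 : ℤ) (p : ℤ)).filter (fun r => ent p a r ≠ ent p a (-r))).max).unbotD 0

/-- The string a' : negate entries with 1 ≤ |j| ≤ T(a), keep the rest. -/
def primeQ (p : ℕ) (a : QStr p) : QStr p :=
  fun j => if 1 ≤ |j.1| ∧ |j.1| ≤ Tof p a then !(a j) else a j

/-- Entrywise negation -a. -/
def negQ (p : ℕ) (a : QStr p) : QStr p := fun j => !(a j)

/-- Index reversal ā, with ā_j = a_{-j}. -/
def revQ (p : ℕ) (a : QStr p) : QStr p :=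
  fun j => a ⟨-j.1, by have h := j.2; simp only [Finset.mem_Icc] at h ⊢; omega⟩

/-- The finite-D iteration (cosine form):
H_D^{(0)}(a) = 1, H_D^{(m)}(a) = (Σ_b f(b) H_D^{(m-1)}(b) cos[(1/√D) Γ·(ab)])^D. -/
def HD (p : ℕ) (β γ : ℕ → ℝ) (D : ℕ) : ℕ → QStr p → ℂ
  | 0, _ => 1
  | m + 1, a =>
      (∑ b : QStr p, fQ p β b * HD p β γ D m b *
        (Real.cos ((1 / Real.sqrt D) * Gdot p γ a b) : ℂ)) ^ D

/-- The finite-D iteration (exponential form):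
H_D^{(0)}(a) = 1, H_D^{(m)}(a) = (Σ_b f(b) H_D^{(m-1)}(b) exp[-(i/√D) Γ·(ab)])^D. -/
def HDexp (p : ℕ) (β γ : ℕ → ℝ) (D : ℕ) : ℕ → QStr p → ℂ
  | 0, _ => 1
  | m + 1, a =>
      (∑ b : QStr p, fQ p β b * HDexp p β γ D m b *
        Complex.exp (-(Complex.I / (Real.sqrt D : ℂ)) * (Gdot p γ a b : ℂ))) ^ D

/-- The D → ∞ iteration: H^{(0)}(a) = 1,
H^{(m)}(a) = exp(-(1/2) Σ_b f(b) H^{(m-1)}(b) (Γ·(ab))²). -/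
def Hinf (p : ℕ) (β γ : ℕ → ℝ) : ℕ → QStr p → ℂ
  | 0, _ => 1
  | m + 1, a =>
      Complex.exp (-(1 / 2 : ℂ) *
        ∑ b : QStr p, fQ p β b * Hinf p β γ m b * ((Gdot p γ a b) ^ 2 : ℝ))

/-- G^{(m)}_{j,k} = Σ_a f(a) H^{(m)}(a) a_j a_k, with H^{(m)} the D → ∞ iterates. -/
def GmatH (p : ℕ) (β γ : ℕ → ℝ) (m : ℕ) (j k : ℤ) : ℂ :=
  ∑ a : QStr p, fQ p β a * Hinf p β γ m a * (ent p a j : ℂ) * (ent p a k : ℂ)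

/-- The recursively-defined G matrices: G^{(0)}_{j,k} = Σ_a f(a) a_j a_k and
G^{(m)}_{j,k} = Σ_a f(a) a_j a_k exp(-(1/2) Σ_{j',k'} G^{(m-1)}_{j',k'} Γ_{j'} Γ_{k'} a_{j'} a_{k'}). -/
def GmatR (p : ℕ) (β γ : ℕ → ℝ) : ℕ → ℤ → ℤ → ℂ
  | 0, j, k => ∑ a : QStr p, fQ p β a * (ent p a j : ℂ) * (ent p a k : ℂ)
  | m + 1, j, k =>
      ∑ a : QStr p, fQ p β a * (ent p a j : ℂ) * (ent p a k : ℂ) *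
        Complex.exp (-(1 / 2 : ℂ) *
          ∑ j' ∈ Finset.Icc (-(p : ℤ)) (p : ℤ), ∑ k' ∈ Finset.Icc (-(p : ℤ)) (p : ℤ),
            GmatR p β γ m j' k' * (Gam γ j' : ℂ) * (Gam γ k' : ℂ) *
              (ent p a j' : ℂ) * (ent p a k' : ℂ))

/-- H^{(m+1)}(a) expressed through G^{(m)}:
H^{(m+1)}(a) = exp(-(1/2) Σ_{j',k'} G^{(m)}_{j',k'} Γ_{j'} Γ_{k'} a_{j'} a_{k'}). -/
def HG (p : ℕ) (β γ : ℕ → ℝ) (m : ℕ) (a : QStr p) : ℂ :=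
  Complex.exp (-(1 / 2 : ℂ) *
    ∑ j' ∈ Finset.Icc (-(p : ℤ)) (p : ℤ), ∑ k' ∈ Finset.Icc (-(p : ℤ)) (p : ℤ),
      GmatR p β γ m j' k' * (Gam γ j' : ℂ) * (Gam γ k' : ℂ) *
        (ent p a j' : ℂ) * (ent p a k' : ℂ))

end

lemma ent_revQ (p : ℕ) (a : QStr p) (j : ℤ) : ent p (revQ p a) j = ent p a (-j) := by
  unfold ent revQ
  by_cases h : j ∈ Finset.Icc (-(p : ℤ)) (p : ℤ)
  · have h' : -j ∈ Finset.Icc (-(p : ℤ)) (p : ℤ) := by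
      simp only [Finset.mem_Icc] at h ⊢; omega
    rw [dif_pos h, dif_pos h']
  · have h' : -j ∉ Finset.Icc (-(p : ℤ)) (p : ℤ) := by
      simp only [Finset.mem_Icc] at h ⊢; omega
    rw [dif_neg h, dif_neg h']

lemma bket_conj (x y β : ℝ) : (starRingEnd ℂ) (bket x y β) = bket x y (-β) := by
  unfold bket
  split_ifs with h
  · rw [Complex.conj_ofReal, Real.cos_neg]
  · rw [map_mul, Complex.conj_I, Complex.conj_ofReal, Real.sin_neg]
    push_cast; ring

lemma bket_symm (x y β : ℝ) : bket x y β = bket y x β := by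
  unfold bket
  simp only [eq_comm]

lemma revQ_involutive (p : ℕ) : Function.Involutive (revQ p) := by
  intro a
  funext j
  simp [revQ]

lemma fQ_revQ (p : ℕ) (β : ℕ → ℝ) (a : QStr p) :
    fQ p β (revQ p a) = (starRingEnd ℂ) (fQ p β a) := by
  unfold fQ
  rw [map_mul, map_prod]
  congr 1
  · rw [map_div₀, map_one, map_ofNat]
  refine Finset.prod_congr rfl fun r _ => ?_
  rw [map_mul, bket_conj, bket_conj, neg_neg]
  rw [ent_revQ, ent_revQ, ent_revQ, ent_revQ]
  have h1 : (-(if r = p then (0 : ℤ) else (r : ℤ) + 1)) =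
      (if r = p then (0 : ℤ) else -((r : ℤ) + 1)) := by split_ifs <;> simp
  have h2 : (-(if r = p then (0 : ℤ) else -((r : ℤ) + 1))) =
      (if r = p then (0 : ℤ) else (r : ℤ) + 1) := by split_ifs <;> simp
  rw [h1, h2, neg_neg]
  rw [bket_symm (ent p a (-(r:ℤ)))]
  rw [bket_symm (ent p a (if r = p then (0:ℤ) else (r:ℤ) + 1))]
  ring

lemma Gam_neg (γ : ℕ → ℝ) (j : ℤ) : Gam γ (-j) = -(Gam γ j) := by
  unfold Gam
  rcases lt_trichotomy j 0 with h | h | h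
  · rw [if_pos (by omega : (0:ℤ) < -j), if_neg (by omega : ¬ (0:ℤ) < j), if_pos h]
    ring
  · subst h; simp
  · rw [if_neg (by omega : ¬ (0:ℤ) < -j), if_pos (by omega : -j < 0), neg_neg, if_pos h]

lemma Gdot_rev (p : ℕ) (γ : ℕ → ℝ) (a b : QStr p) :
    Gdot p γ (revQ p a) (revQ p b) = -(Gdot p γ a b) := by
  unfold Gdot
  rw [← Finset.sum_neg_distrib]
  refine Finset.sum_equiv (Equiv.neg ℤ) (fun i => ?_) (fun i _ => ?_)
  · simp only [Equiv.neg_apply, Finset.mem_Icc]; omega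
  · simp only [Equiv.neg_apply, ent_revQ, Gam_neg]
    ring

lemma Hinf_rev (p : ℕ) (β γ : ℕ → ℝ) (m : ℕ) (a : QStr p) :
    Hinf p β γ m (revQ p a) = (starRingEnd ℂ) (Hinf p β γ m a) := by
  induction m generalizing a with
  | zero => simp [Hinf]
  | succ m ih =>
    show Complex.exp _ = (starRingEnd ℂ) (Complex.exp _)
    rw [← Complex.exp_conj]
    congr 1
    rw [map_mul, map_sum]
    congr 1
    · rw [map_neg, map_div₀, map_one, map_ofNat]
    refine Fintype.sum_equiv ((revQ_involutive p).toPerm) _ _ fun b => ?_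
    simp only [Function.Involutive.coe_toPerm]
    have hg : Gdot p γ a (revQ p b) = -(Gdot p γ (revQ p a) b) := by
      conv_lhs => rw [← revQ_involutive p a]
      exact Gdot_rev p γ (revQ p a) b
    rw [fQ_revQ, ih, hg, neg_sq, map_mul, map_mul, Complex.conj_conj, Complex.conj_conj,
      Complex.conj_ofReal]

/-- G^{(m)}_{0,r} = conj(G^{(m)}_{0,-r}) for 1 ≤ r ≤ p. -/
theorem stmt_15 (p : ℕ) (hp : 1 ≤ p) (β γ : ℕ → ℝ) (m : ℕ) (hm : m ≤ p)
    (r : ℤ) (hr : 1 ≤ r) (hrp : r ≤ (p : ℤ)) :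
    GmatH p β γ m 0 r = (starRingEnd ℂ) (GmatH p β γ m 0 (-r)) := by
  unfold GmatH
  rw [map_sum]
  refine Fintype.sum_equiv ((revQ_involutive p).toPerm) _ _ fun a => ?_
  simp only [Function.Involutive.coe_toPerm]
  rw [map_mul, map_mul, map_mul, fQ_revQ, Hinf_rev, ent_revQ, ent_revQ,
    Complex.conj_ofReal, Complex.conj_ofReal, neg_zero, neg_neg,
    Complex.conj_conj, Complex.conj_conj]
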